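/- Let s ≥ 2, let C ⊆ Z_{2^s}^n be a subgroup, and let i ∈ {1,…,s}. If the binary code Φ(C_i) is linear, then the binary code Φ(C) is linear. -/

import Mathlib

/-- The `i`-th digit of the binary expansion of `u : ZMod (2^s)`. -/
def gdigit (s : ℕ) (u : ZMod (2^s)) (i : ℕ) : ZMod 2 :=
  if (ZMod.val u).testBit i then 1 else 0

/-- Carlet's generalized Gray map `φ : ZMod (2^s) → (Z_2^{s-1} → Z_2)`:
the coordinate indexed by `y ∈ Z_2^{s-1}` is `u_{s-1} + ∑ u_i y_i`. -/
def gray (s : ℕ) (u : ZMod (2^s)) : (Fin (s - 1) → ZMod 2) → ZMod 2 :=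
  fun y => gdigit s u (s - 1) + ∑ i : Fin (s - 1), gdigit s u (i : ℕ) * y i

/-- The coordinatewise extension `Φ` of the Gray map, on vectors indexed by `ι`. -/
def PhiMap {ι : Type} (s : ℕ) (u : ι → ZMod (2^s)) :
    ι × (Fin (s - 1) → ZMod 2) → ZMod 2 :=
  fun p => gray s (u p.1) p.2

/-- A binary code is linear if it is closed under addition. -/
def IsLinearCode {V : Type} [Add V] (C : Set V) : Prop :=
  ∀ x ∈ C, ∀ y ∈ C, x + y ∈ C

/-- The `m`-fold replication `(c,c,…,c)` of a vector `c` of length `n`. -/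
def replicate {α : Type} (m n : ℕ) (c : Fin n → α) : Fin (m * n) → α :=
  fun k => c ⟨(k : ℕ) % n, Nat.mod_lt _ (Nat.pos_of_ne_zero (fun h => by
    have hk := k.isLt
    simp [h] at hk))⟩

/-- The vector `w_i` made of `2^{s-i+1}` consecutive constant blocks of length `n`,
the `j`-th block having all entries equal to `j·2^{i-1}`. -/
def wRep (s n i : ℕ) : Fin (2 ^ (s - i + 1) * n) → ZMod (2^s) :=
  fun k => (((k : ℕ) / n : ℕ) : ZMod (2^s)) * 2 ^ (i - 1)

/-- The code `C_i = {(c,…,c) + λ·w_i : c ∈ C, λ ∈ Z_{2^s}}`. -/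
def Ci (s n : ℕ) (C : Set (Fin n → ZMod (2^s))) (i : ℕ) :
    Set (Fin (2 ^ (s - i + 1) * n) → ZMod (2^s)) :=
  {x | ∃ c ∈ C, ∃ lam : ZMod (2^s), x = replicate (2 ^ (s - i + 1)) n c + lam • wRep s n i}

/-!
Restricting a word of `C_i` to its first block of `n` coordinates recovers the word of `C`
it was built from, since `w_i` vanishes on that block; so `C` is a puncturing of `C_i`.
The Gray map acts coordinatewise, hence commutes with puncturing, and puncturing is additive,
so it carries the linear binary code `Φ(C_i)` onto a linear code, which is `Φ(C)`.
-/

theorem IsLinearCode.image {V W : Type} [Add V] [Add W] {C : Set V} (hC : IsLinearCode C)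
    {f : V → W} (hf : ∀ x y, f (x + y) = f x + f y) : IsLinearCode (f '' C) := by
  rintro _ ⟨x, hx, rfl⟩ _ ⟨y, hy, rfl⟩
  exact ⟨x + y, hC x hx y hy, hf x y⟩

theorem PhiMap_comp {ι κ : Type} (s : ℕ) (u : κ → ZMod (2^s)) (e : ι → κ) :
    PhiMap s (u ∘ e) = PhiMap s u ∘ Prod.map e id :=
  rfl

theorem IsLinearCode.image_PhiMap_comp {ι κ : Type} {s : ℕ} {D : Set (κ → ZMod (2^s))}
    (hD : IsLinearCode (PhiMap s '' D)) (e : ι → κ) :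
    IsLinearCode (PhiMap s '' ((· ∘ e) '' D)) := by
  have hpunct := hD.image (f := (· ∘ Prod.map e id)) fun _ _ => rfl
  simpa only [Set.image_image, PhiMap_comp] using hpunct

theorem le_two_pow_mul (k n : ℕ) : n ≤ 2 ^ k * n :=
  Nat.le_mul_of_pos_left n (Nat.two_pow_pos k)

theorem replicate_comp_castLE {α : Type} {m n : ℕ} (c : Fin n → α) (h : n ≤ m * n) :
    replicate m n c ∘ Fin.castLE h = c := by
  funext k
  simp only [Function.comp_apply, replicate, Fin.val_castLE, Nat.mod_eq_of_lt k.isLt]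

theorem wRep_comp_castLE (s n i : ℕ) (h : n ≤ 2 ^ (s - i + 1) * n) :
    wRep s n i ∘ Fin.castLE h = 0 := by
  funext k
  simp only [Function.comp_apply, wRep, Fin.val_castLE, Nat.div_eq_of_lt k.isLt,
    Nat.cast_zero, zero_mul, Pi.zero_apply]

theorem comp_castLE_image_Ci (s n i : ℕ) (C : Set (Fin n → ZMod (2^s))) :
    (· ∘ Fin.castLE (le_two_pow_mul (s - i + 1) n)) '' Ci s n C i = C := by
  apply Set.Subset.antisymm
  · rintro _ ⟨_, ⟨c, hc, lam, rfl⟩, rfl⟩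
    dsimp only
    rwa [Pi.add_comp, Pi.smul_comp, replicate_comp_castLE, wRep_comp_castLE, smul_zero,
      add_zero]
  · intro c hc
    exact ⟨_, ⟨c, hc, 0, by rw [zero_smul, add_zero]⟩, replicate_comp_castLE c _⟩

theorem linear_of_Ci_linear_general (s n : ℕ) (C : AddSubgroup (Fin n → ZMod (2^s)))
    (i : ℕ)
    (h : IsLinearCode (PhiMap s '' Ci s n (C : Set (Fin n → ZMod (2^s))) i)) :
    IsLinearCode (PhiMap s '' (C : Set (Fin n → ZMod (2^s)))) := by
  have hpunct := h.image_PhiMap_comp (Fin.castLE (le_two_pow_mul (s - i + 1) n))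
  rwa [comp_castLE_image_Ci] at hpunct

theorem linear_of_Ci_linear (s n : ℕ) (hs : 2 ≤ s) (C : AddSubgroup (Fin n → ZMod (2^s)))
    (i : ℕ) (hi1 : 1 ≤ i) (his : i ≤ s)
    (h : IsLinearCode (PhiMap s '' Ci s n (C : Set (Fin n → ZMod (2^s))) i)) :
    IsLinearCode (PhiMap s '' (C : Set (Fin n → ZMod (2^s)))) :=
  linear_of_Ci_linear_general s n C i h
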